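/- Let α, β ∈ ℝᵏ with αⱼ ≤ βⱼ < αⱼ + π for all j, and let z, z' ∈ ℂᵏ with z' ∈ z + S̄*_{α,β}. Then e_{−z'}·U_{α,β} := { ζ ↦ e^{−z'·ζ} g(ζ) : g ∈ U_{α,β} } is contained in e_{−z}·U_{α,β}, and e_{−z'}·U_{α,β} is dense in e_{−z}·U_{α,β} for the norm ‖f‖ := sup_{ζ ∈ S̄_{α,β}} |e^{z·ζ} f(ζ)|. (Proposition 11.2(ii)) -/

import Mathlib

open Filter Topology Set

noncomputable section

/-- The closed sector `S̄_{a,b} = { r e^{iθ} : r ≥ 0, a ≤ θ ≤ b }` (a closed ray when `a = b`). -/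
def closedSector (a b : ℝ) : Set ℂ :=
  {z : ℂ | ∃ r : ℝ, 0 ≤ r ∧ ∃ θ ∈ Set.Icc a b, z = (r : ℂ) * Complex.exp ((θ : ℂ) * Complex.I)}

/-- The open sector `S_{a,b} = { r e^{iθ} : r > 0, a < θ < b }`. -/
def openSector (a b : ℝ) : Set ℂ :=
  {z : ℂ | ∃ r : ℝ, 0 < r ∧ ∃ θ ∈ Set.Ioo a b, z = (r : ℂ) * Complex.exp ((θ : ℂ) * Complex.I)}

/-- The closed multisector `S̄_{α,β} = Πⱼ S̄_{αⱼ,βⱼ} ⊆ ℂᵏ`. -/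
def multiSector {k : ℕ} (α β : Fin k → ℝ) : Set (Fin k → ℂ) :=
  {ζ | ∀ j, ζ j ∈ closedSector (α j) (β j)}

/-- Membership in the space `U_{α,β}`: continuous on the closed multisector, vanishing at
infinity there, and holomorphic in each coordinate separately on the open sectors. -/
def memU {k : ℕ} (α β : Fin k → ℝ) (f : (Fin k → ℂ) → ℂ) : Prop :=
  ContinuousOn f (multiSector α β) ∧
  Filter.Tendsto f
    (Filter.principal (multiSector α β) ⊓
      Filter.comap (fun ζ : Fin k → ℂ => ‖ζ‖) Filter.atTop) (nhds 0) ∧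
  ∀ j : Fin k, α j < β j → ∀ ζ ∈ multiSector α β,
    DifferentiableOn ℂ (fun u : ℂ => f (Function.update ζ j u)) (openSector (α j) (β j))

open Complex
open scoped Real

/-! For `w` in the dual sector of `S̄_{a,b}` and `u ∈ S̄_{a,b}` one has `Re (w u) ≥ 0`, so
`e^{-(z'-z)·ζ}` is bounded by `1` on `S̄_{α,β}`; this gives the inclusion.

For the density, rotate each sector to be symmetric about `ℝ₊` and raise it to a power `p > 1`
with `p (b - a) / 2 < π / 2`: the map `P u = (e^{-i(a+b)/2} u)^p` is continuous on the closed
sector, holomorphic on the open one, and `Re P u ≥ c |u|^p` with `c > 0`. Hence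
`h_t = e^{(z'-z)·ζ - t Σⱼ P(ζⱼ)} g` lies in `U_{α,β}` for `t > 0` (superlinear decay beats the
linear growth of the exponent), and `g - e^{-(z'-z)·ζ} h_t = (1 - e^{-t Σⱼ P(ζⱼ)}) g` is uniformly
small for small `t`: far out because `g` is small there and `|1 - e^{-t Σⱼ P(ζⱼ)}| ≤ 2`, on
bounded sets because `Σⱼ P(ζⱼ)` is bounded there. -/

lemma norm_ofReal_mul_exp_ofReal_mul_I {r : ℝ} (hr : 0 ≤ r) (θ : ℝ) :
    ‖(r : ℂ) * exp (θ * I)‖ = r := by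
  rw [norm_mul, norm_exp_ofReal_mul_I, mul_one, norm_real, Real.norm_of_nonneg hr]

lemma openSector_subset_closedSector (a b : ℝ) : openSector a b ⊆ closedSector a b := by
  rintro z ⟨r, hr, θ, hθ, rfl⟩
  exact ⟨r, hr.le, θ, Ioo_subset_Icc_self hθ, rfl⟩

lemma ne_zero_of_mem_openSector {a b : ℝ} {u : ℂ} (hu : u ∈ openSector a b) : u ≠ 0 := by
  obtain ⟨r, hr, θ, -, rfl⟩ := hu
  exact mul_ne_zero (ofReal_ne_zero.mpr hr.ne') (exp_ne_zero _)

lemma re_mul_nonneg_of_mem_closedSector {a b : ℝ} {w u : ℂ}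
    (hw : w ∈ closedSector (-(π / 2) - a) (π / 2 - b)) (hu : u ∈ closedSector a b) :
    0 ≤ (w * u).re := by
  obtain ⟨ρ, hρ, σ, hσ, rfl⟩ := hw
  obtain ⟨r, hr, θ, hθ, rfl⟩ := hu
  have hpolar : (ρ : ℂ) * exp (σ * I) * (r * exp (θ * I)) =
      ((ρ * r : ℝ) : ℂ) * exp ((σ + θ : ℝ) * I) := by
    push_cast
    rw [add_mul, exp_add]
    ring
  have hcos : 0 ≤ Real.cos (σ + θ) :=
    Real.cos_nonneg_of_mem_Icc ⟨by linarith [hσ.1, hθ.1], by linarith [hσ.2, hθ.2]⟩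
  rw [hpolar, re_ofReal_mul, exp_ofReal_mul_I_re]
  positivity

lemma isCompact_closedSector_inter_closedBall (a b R : ℝ) :
    IsCompact (closedSector a b ∩ Metric.closedBall 0 R) := by
  have hpolar : closedSector a b ∩ Metric.closedBall 0 R =
      (fun x : ℝ × ℝ => (x.1 : ℂ) * exp (x.2 * I)) '' (Icc 0 R ×ˢ Icc a b) := by
    ext z
    simp only [mem_inter_iff, mem_closedBall_zero_iff, mem_image, mem_prod, Prod.exists]
    constructor
    · rintro ⟨⟨r, hr, θ, hθ, rfl⟩, hR⟩
      rw [norm_ofReal_mul_exp_ofReal_mul_I hr] at hR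
      exact ⟨r, θ, ⟨⟨hr, hR⟩, hθ⟩, rfl⟩
    · rintro ⟨r, θ, ⟨⟨hr, hR⟩, hθ⟩, rfl⟩
      exact ⟨⟨r, hr, θ, hθ, rfl⟩, by rwa [norm_ofReal_mul_exp_ofReal_mul_I hr]⟩
  rw [hpolar]
  exact (isCompact_Icc.prod isCompact_Icc).image (by fun_prop)

lemma exists_mul_sub_mul_rpow_le {c d p : ℝ} (hc : 0 ≤ c) (hd : 0 < d) (hp : 1 < p) :
    ∃ K, ∀ r, 0 ≤ r → c * r - d * r ^ p ≤ K := by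
  have hcd : 0 ≤ c / d := div_nonneg hc hd.le
  set r₀ := (c / d) ^ (p - 1)⁻¹
  refine ⟨c * r₀, fun r hr => ?_⟩
  have hdr : 0 ≤ d * r ^ p := mul_nonneg hd.le (Real.rpow_nonneg hr p)
  rcases le_total r r₀ with h | h
  · nlinarith [mul_le_mul_of_nonneg_left h hc]
  · -- past `r₀` the power term dominates: `d r^p = d r^(p-1) r ≥ d r₀^(p-1) r = c r`
    have hr₀ : r₀ ^ (p - 1) = c / d := Real.rpow_inv_rpow hcd (by linarith)
    have hpow : r ^ p = r ^ (p - 1) * r := by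
      rw [← Real.rpow_add_one' hr (by linarith), sub_add_cancel]
    have hmono : r₀ ^ (p - 1) ≤ r ^ (p - 1) :=
      Real.rpow_le_rpow (Real.rpow_nonneg hcd _) h (by linarith)
    have hcr : c * r ≤ d * r ^ p := by
      calc c * r = d * r₀ ^ (p - 1) * r := by rw [hr₀]; field_simp
        _ ≤ d * r ^ (p - 1) * r := by gcongr
        _ = d * r ^ p := by rw [hpow, mul_assoc]
    nlinarith [mul_nonneg hc (Real.rpow_nonneg hcd (p - 1)⁻¹)]

section SectorPow

variable {a b : ℝ}

/-- Any exponent in `(1, π / (b - a))` would do: `p > 1` beats linear growth, and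
`p (b - a) / 2 < π / 2` keeps `Re (sectorPow a b u)` comparable to `‖u‖ ^ p`. -/
def sectorExponent (a b : ℝ) : ℝ := 2 * π / (b - a + π)

def sectorRotation (a b : ℝ) : ℂ := exp ((-(a + b) / 2 : ℝ) * I)

def sectorPow (a b : ℝ) (u : ℂ) : ℂ := (sectorRotation a b * u) ^ (sectorExponent a b : ℂ)

lemma sectorExponent_pos (hab : a ≤ b) : 0 < sectorExponent a b :=
  div_pos (by positivity) (by linarith [Real.pi_pos])

lemma one_lt_sectorExponent (hab : a ≤ b) (hba : b < a + π) : 1 < sectorExponent a b := by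
  rw [sectorExponent, one_lt_div (by linarith [Real.pi_pos])]
  linarith

lemma sectorExponent_mul_lt (hab : a ≤ b) (hba : b < a + π) :
    sectorExponent a b * ((b - a) / 2) < π / 2 := by
  rw [sectorExponent, div_mul_eq_mul_div, div_lt_div_iff₀ (by linarith [Real.pi_pos]) two_pos]
  nlinarith [Real.pi_pos]

lemma cos_sectorExponent_mul_pos (hab : a ≤ b) (hba : b < a + π) :
    0 < Real.cos (sectorExponent a b * ((b - a) / 2)) := by
  have := mul_nonneg (sectorExponent_pos hab).le (by linarith : 0 ≤ (b - a) / 2)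
  exact Real.cos_pos_of_mem_Ioo ⟨by linarith [Real.pi_pos], sectorExponent_mul_lt hab hba⟩

lemma norm_sectorRotation : ‖sectorRotation a b‖ = 1 :=
  norm_exp_ofReal_mul_I _

lemma abs_arg_sectorRotation_mul_le (hba : b < a + π) {u : ℂ} (hu : u ∈ closedSector a b) :
    |arg (sectorRotation a b * u)| ≤ (b - a) / 2 := by
  obtain ⟨r, hr, θ, hθ, rfl⟩ := hu
  have hψ : |θ - (a + b) / 2| ≤ (b - a) / 2 :=
    abs_le.mpr ⟨by linarith [hθ.1], by linarith [hθ.2]⟩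
  rcases hr.eq_or_lt with rfl | hr
  · simpa using (abs_nonneg _).trans hψ
  have hrot : sectorRotation a b * (r * exp (θ * I)) =
      r * (cos ↑(θ - (a + b) / 2) + sin ↑(θ - (a + b) / 2) * I) := by
    rw [sectorRotation, ← exp_mul_I, mul_left_comm, ← exp_add]
    push_cast
    ring_nf
  obtain ⟨hψ₁, hψ₂⟩ := abs_le.mp hψ
  rwa [hrot, arg_mul_cos_add_sin_mul_I hr ⟨by linarith, by linarith⟩]

lemma norm_sectorPow (u : ℂ) : ‖sectorPow a b u‖ = ‖u‖ ^ sectorExponent a b := by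
  rw [sectorPow, norm_cpow_real, norm_mul, norm_sectorRotation, one_mul]

lemma cos_mul_rpow_le_re_sectorPow (hab : a ≤ b) (hba : b < a + π) {u : ℂ}
    (hu : u ∈ closedSector a b) :
    Real.cos (sectorExponent a b * ((b - a) / 2)) * ‖u‖ ^ sectorExponent a b ≤
      (sectorPow a b u).re := by
  have hp := sectorExponent_pos hab
  rw [sectorPow, cpow_ofReal_re, norm_mul, norm_sectorRotation, one_mul, mul_comm (‖u‖ ^ _)]
  gcongr
  rw [← Real.cos_abs (arg _ * _), abs_mul, abs_of_pos hp, mul_comm |arg _|]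
  exact Real.cos_le_cos_of_nonneg_of_le_pi (by positivity)
    (by linarith [sectorExponent_mul_lt hab hba, Real.pi_pos])
    (mul_le_mul_of_nonneg_left (abs_arg_sectorRotation_mul_le hba hu) hp.le)

lemma re_sectorPow_nonneg (hab : a ≤ b) (hba : b < a + π) {u : ℂ}
    (hu : u ∈ closedSector a b) : 0 ≤ (sectorPow a b u).re :=
  (mul_nonneg (cos_sectorExponent_mul_pos hab hba).le (Real.rpow_nonneg (norm_nonneg u) _)).trans
    (cos_mul_rpow_le_re_sectorPow hab hba hu)

lemma sectorRotation_mul_mem_slitPlane (hba : b < a + π) {u : ℂ} (hu : u ∈ closedSector a b)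
    (hu₀ : u ≠ 0) : sectorRotation a b * u ∈ slitPlane := by
  have hrot : sectorRotation a b ≠ 0 := norm_ne_zero_iff.mp (by rw [norm_sectorRotation]; simp)
  refine mem_slitPlane_iff_arg.mpr ⟨fun h => ?_, mul_ne_zero hrot hu₀⟩
  have := abs_arg_sectorRotation_mul_le hba hu
  rw [h, abs_of_pos Real.pi_pos] at this
  linarith [Real.pi_pos]

lemma differentiableAt_sectorPow (hba : b < a + π) {u : ℂ} (hu : u ∈ closedSector a b)
    (hu₀ : u ≠ 0) : DifferentiableAt ℂ (sectorPow a b) u :=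
  (differentiableAt_id.const_mul _).cpow_const (sectorRotation_mul_mem_slitPlane hba hu hu₀)

lemma continuousAt_sectorPow_zero (hab : a ≤ b) : ContinuousAt (sectorPow a b) 0 := by
  have hp := sectorExponent_pos hab
  have hzero : sectorPow a b 0 = 0 := by
    rw [sectorPow, mul_zero, zero_cpow (ofReal_ne_zero.mpr hp.ne')]
  have hnorm : Tendsto (fun u : ℂ => ‖u‖ ^ sectorExponent a b) (𝓝 0) (𝓝 0) := by
    simpa [Real.zero_rpow hp.ne'] using
      (continuous_norm.rpow_const fun _ => Or.inr hp.le).tendsto (0 : ℂ)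
  rw [ContinuousAt, hzero]
  exact squeeze_zero_norm (fun u => (norm_sectorPow u).le) hnorm

lemma continuousOn_sectorPow (hab : a ≤ b) (hba : b < a + π) :
    ContinuousOn (sectorPow a b) (closedSector a b) := by
  intro u hu
  rcases eq_or_ne u 0 with rfl | hu₀
  · exact (continuousAt_sectorPow_zero hab).continuousWithinAt
  · exact (differentiableAt_sectorPow hba hu hu₀).continuousAt.continuousWithinAt

lemma differentiableOn_sectorPow (hba : b < a + π) :
    DifferentiableOn ℂ (sectorPow a b) (openSector a b) := fun _ hu =>
  (differentiableAt_sectorPow hba (openSector_subset_closedSector a b hu)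
    (ne_zero_of_mem_openSector hu)).differentiableWithinAt

lemma exists_re_mul_sub_mul_sectorPow_le (hab : a ≤ b) (hba : b < a + π) (w : ℂ) {t : ℝ}
    (ht : 0 < t) : ∃ K, ∀ u ∈ closedSector a b, (w * u - t * sectorPow a b u).re ≤ K := by
  obtain ⟨K, hK⟩ := exists_mul_sub_mul_rpow_le (norm_nonneg w)
    (mul_pos ht (cos_sectorExponent_mul_pos hab hba)) (one_lt_sectorExponent hab hba)
  refine ⟨K, fun u hu => ?_⟩
  have hlin : (w * u).re ≤ ‖w‖ * ‖u‖ := (re_le_norm _).trans (norm_mul _ _).le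
  have hpow := mul_le_mul_of_nonneg_left (cos_mul_rpow_le_re_sectorPow hab hba hu) ht.le
  have := hK ‖u‖ (norm_nonneg u)
  rw [sub_re, re_ofReal_mul]
  linarith

lemma norm_sum_sectorPow_le {k : ℕ} {α β : Fin k → ℝ} (hαβ : ∀ j, α j ≤ β j)
    {ζ : Fin k → ℂ} {R : ℝ} (hζ : ‖ζ‖ ≤ R) :
    ‖∑ j, sectorPow (α j) (β j) (ζ j)‖ ≤ ∑ j, R ^ sectorExponent (α j) (β j) :=
  (norm_sum_le _ _).trans <| Finset.sum_le_sum fun j _ => by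
    rw [norm_sectorPow]
    exact Real.rpow_le_rpow (norm_nonneg _) ((norm_le_pi_norm ζ j).trans hζ)
      (sectorExponent_pos (hαβ j)).le

end SectorPow

lemma norm_one_sub_exp_neg_le_two {w : ℂ} (hw : 0 ≤ w.re) : ‖1 - exp (-w)‖ ≤ 2 := by
  have : ‖exp (-w)‖ ≤ 1 := by
    rw [norm_exp, neg_re, Real.exp_le_one_iff]
    linarith
  calc ‖1 - exp (-w)‖ ≤ ‖(1 : ℂ)‖ + ‖exp (-w)‖ := norm_sub_le _ _
    _ ≤ 2 := by rw [norm_one]; linarith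

lemma norm_one_sub_exp_neg_le {w : ℂ} (hw : ‖w‖ ≤ 1) : ‖1 - exp (-w)‖ ≤ 2 * ‖w‖ := by
  rw [norm_sub_rev, ← norm_neg w]
  exact norm_exp_sub_one_le (by rwa [norm_neg])

lemma exists_pos_forall_norm_one_sub_exp_neg_mul_le {X : Type*} {S : Set X} {g Q : X → ℂ}
    {ε M C : ℝ} (hε : 0 < ε) (hM : 0 < M) (hC : 0 < C) (hgM : ∀ x ∈ S, ‖g x‖ ≤ M)
    (hQ : ∀ x ∈ S, 0 ≤ (Q x).re) (hsplit : ∀ x ∈ S, ‖g x‖ ≤ ε / 2 ∨ ‖Q x‖ ≤ C) :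
    ∃ t : ℝ, 0 < t ∧ ∀ x ∈ S, ‖(1 - exp (-(t * Q x))) * g x‖ ≤ ε := by
  set t := min 1 (ε / (2 * M)) / C
  have ht : 0 < t := by positivity
  have htC : t * C = min 1 (ε / (2 * M)) := div_mul_cancel₀ _ hC.ne'
  have htCM : 2 * (t * C) * M ≤ ε := by
    rw [htC]
    calc 2 * min 1 (ε / (2 * M)) * M ≤ 2 * (ε / (2 * M)) * M := by gcongr; exact min_le_right _ _
      _ = ε := by field_simp
  refine ⟨t, ht, fun x hx => ?_⟩
  rw [norm_mul]
  rcases hsplit x hx with hg | hQC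
  · have hre : 0 ≤ ((t : ℂ) * Q x).re := by
      rw [re_ofReal_mul]
      exact mul_nonneg ht.le (hQ x hx)
    calc _ ≤ 2 * (ε / 2) := mul_le_mul (norm_one_sub_exp_neg_le_two hre) hg (norm_nonneg _) zero_le_two
      _ = ε := by ring
  · have htQ : ‖(t : ℂ) * Q x‖ ≤ t * C := by
      rw [norm_mul, norm_real, Real.norm_of_nonneg ht.le]
      gcongr
    have hexp : ‖1 - exp (-(t * Q x))‖ ≤ 2 * (t * C) :=
      (norm_one_sub_exp_neg_le (htQ.trans (htC ▸ min_le_left _ _))).trans (by gcongr)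
    calc _ ≤ 2 * (t * C) * M := mul_le_mul hexp (hgM x hx) (norm_nonneg _) (by positivity)
      _ ≤ ε := htCM

namespace memU

variable {k : ℕ} {α β : Fin k → ℝ} {g : (Fin k → ℂ) → ℂ}

lemma exists_norm_le_of_le_norm (hg : memU α β g) {δ : ℝ} (hδ : 0 < δ) :
    ∃ R, 0 ≤ R ∧ ∀ ζ ∈ multiSector α β, R ≤ ‖ζ‖ → ‖g ζ‖ ≤ δ := by
  have h := (tendsto_zero_iff_norm_tendsto_zero.mp hg.2.1).eventually (ge_mem_nhds hδ)
  rw [inf_comm, eventually_inf_principal, eventually_comap, eventually_atTop] at h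
  obtain ⟨R, hR⟩ := h
  exact ⟨max R 0, le_max_right _ _,
    fun ζ hζ hRζ => hR _ ((le_max_left _ _).trans hRζ) ζ rfl hζ⟩

lemma exists_bound (hg : memU α β g) : ∃ M, 0 < M ∧ ∀ ζ ∈ multiSector α β, ‖g ζ‖ ≤ M := by
  obtain ⟨R, -, hR⟩ := hg.exists_norm_le_of_le_norm one_pos
  set B : Set (Fin k → ℂ) := univ.pi fun j => closedSector (α j) (β j) ∩ Metric.closedBall 0 R
  have hBS : B ⊆ multiSector α β := fun ζ hζ j => (hζ j (mem_univ j)).1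
  obtain ⟨C, hC⟩ := (isCompact_univ_pi fun j => isCompact_closedSector_inter_closedBall _ _ R)
    |>.exists_bound_of_continuousOn (hg.1.mono hBS)
  refine ⟨max C 1, by positivity, fun ζ hζ => ?_⟩
  rcases le_total ‖ζ‖ R with h | h
  · have hζB : ζ ∈ B := fun j _ =>
      ⟨hζ j, mem_closedBall_zero_iff.mpr ((norm_le_pi_norm ζ j).trans h)⟩
    exact (hC ζ hζB).trans (le_max_left _ _)
  · exact (hR ζ hζ h).trans (le_max_right _ _)

lemma mul {φ : (Fin k → ℂ) → ℂ} {B : ℝ} (hφc : ContinuousOn φ (multiSector α β))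
    (hφd : ∀ j, α j < β j → ∀ ζ ∈ multiSector α β,
      DifferentiableOn ℂ (fun u => φ (Function.update ζ j u)) (openSector (α j) (β j)))
    (hφB : ∀ ζ ∈ multiSector α β, ‖φ ζ‖ ≤ B) (hg : memU α β g) :
    memU α β fun ζ => φ ζ * g ζ := by
  refine ⟨hφc.mul hg.1, ?_, fun j hj ζ hζ => (hφd j hj ζ hζ).mul (hg.2.2 j hj ζ hζ)⟩
  refine squeeze_zero_norm' ?_ (by simpa using
    (tendsto_zero_iff_norm_tendsto_zero.mp hg.2.1).const_mul B)
  filter_upwards [mem_inf_of_left (mem_principal_self _)] with ζ hζ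
  rw [norm_mul]
  exact mul_le_mul_of_nonneg_right (hφB ζ hζ) (norm_nonneg _)

lemma cexp_sum_mul (f : Fin k → ℂ → ℂ) (K : Fin k → ℝ)
    (hc : ∀ j, ContinuousOn (f j) (closedSector (α j) (β j)))
    (hd : ∀ j, DifferentiableOn ℂ (f j) (openSector (α j) (β j)))
    (hre : ∀ j, ∀ u ∈ closedSector (α j) (β j), (f j u).re ≤ K j) (hg : memU α β g) :
    memU α β fun ζ => exp (∑ j, f j (ζ j)) * g ζ := by
  refine hg.mul (B := Real.exp (∑ j, K j)) ?_ (fun j _ ζ _ => ?_) fun ζ hζ => ?_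
  · exact continuous_exp.comp_continuousOn <| continuousOn_finsetSum _ fun j _ =>
      (hc j).comp (continuous_apply j).continuousOn fun ζ hζ => hζ j
  · refine (DifferentiableOn.fun_sum fun i _ => ?_).cexp
    rcases eq_or_ne i j with rfl | hij
    · simpa only [Function.update_self] using hd i
    · simpa only [Function.update_of_ne hij] using differentiableOn_const _
  · rw [norm_exp, Real.exp_le_exp, re_sum]
    exact Finset.sum_le_sum fun j _ => hre j _ (hζ j)

lemma cexp_neg_sum_mul {w : Fin k → ℂ}
    (hw : ∀ j, w j ∈ closedSector (-(π / 2) - α j) (π / 2 - β j)) (hg : memU α β g) :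
    memU α β fun ζ => exp (-∑ j, w j * ζ j) * g ζ := by
  simpa only [Finset.sum_neg_distrib] using
    hg.cexp_sum_mul (fun j u => -(w j * u)) 0 (fun j => by fun_prop) (fun j => by fun_prop)
      fun j u hu => by simpa using re_mul_nonneg_of_mem_closedSector (hw j) hu

lemma exists_norm_sub_cexp_neg_sum_mul_le (hαβ : ∀ j, α j ≤ β j)
    (hπ : ∀ j, β j < α j + π) (w : Fin k → ℂ) (hg : memU α β g) {ε : ℝ} (hε : 0 < ε) :
    ∃ h, memU α β h ∧ ∀ ζ ∈ multiSector α β, ‖g ζ - exp (-∑ j, w j * ζ j) * h ζ‖ ≤ ε := by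
  obtain ⟨M, hM, hgM⟩ := hg.exists_bound
  obtain ⟨R, hR, hgR⟩ := hg.exists_norm_le_of_le_norm (half_pos hε)
  obtain ⟨t, ht, happrox⟩ := exists_pos_forall_norm_one_sub_exp_neg_mul_le hε hM
    (C := ∑ j, R ^ sectorExponent (α j) (β j) + 1) (by positivity) hgM
    (fun ζ hζ => by
      rw [re_sum]
      exact Finset.sum_nonneg fun j _ => re_sectorPow_nonneg (hαβ j) (hπ j) (hζ j))
    (fun ζ hζ => (le_total R ‖ζ‖).imp (hgR ζ hζ) fun h =>
      (norm_sum_sectorPow_le hαβ h).trans (le_add_of_nonneg_right zero_le_one))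
  choose K hK using fun j => exists_re_mul_sub_mul_sectorPow_le (hαβ j) (hπ j) (w j) ht
  refine ⟨fun ζ => exp (∑ j, (w j * ζ j - t * sectorPow (α j) (β j) (ζ j))) * g ζ,
    hg.cexp_sum_mul (fun j u => w j * u - t * sectorPow (α j) (β j) u) K
      (fun j => (continuousOn_const.mul continuousOn_id).sub
        (continuousOn_const.mul (continuousOn_sectorPow (hαβ j) (hπ j))))
      (fun j => (differentiableOn_id.const_mul _).sub
        ((differentiableOn_sectorPow (hπ j)).const_mul _)) hK,
    fun ζ hζ => ?_⟩
  convert happrox ζ hζ using 2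
  rw [← mul_assoc, ← exp_add, sub_mul, one_mul, Finset.sum_sub_distrib, ← Finset.mul_sum]
  ring_nf

end memU

/-- Proposition 11.2(ii): if `z' ∈ z + S̄*_{α,β}` then
`e_{−z'}·U_{α,β} ⊆ e_{−z}·U_{α,β}`, and `e_{−z'}·U_{α,β}` is dense in `e_{−z}·U_{α,β}` for the
norm `‖f‖ = sup_{ζ ∈ S̄_{α,β}} |e^{z·ζ} f(ζ)|`. -/
theorem statement15
    {k : ℕ}
    (α β : Fin k → ℝ) (hαβ : ∀ j, α j ≤ β j) (hπ : ∀ j, β j < α j + Real.pi)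
    (z z' : Fin k → ℂ)
    (hz : ∀ j, z' j - z j ∈ closedSector (-(Real.pi / 2) - α j) (Real.pi / 2 - β j)) :
    -- inclusion `e_{−z'}·U_{α,β} ⊆ e_{−z}·U_{α,β}`
    (∀ g : (Fin k → ℂ) → ℂ, memU α β g →
      ∃ h : (Fin k → ℂ) → ℂ, memU α β h ∧
        ∀ ζ ∈ multiSector α β,
          Complex.exp (-∑ j, z' j * ζ j) * g ζ = Complex.exp (-∑ j, z j * ζ j) * h ζ) ∧
    -- density of `e_{−z'}·U_{α,β}` in `(e_{−z}·U_{α,β}, sup_{ζ} |e^{z·ζ} · |)`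
    (∀ g : (Fin k → ℂ) → ℂ, memU α β g → ∀ ε : ℝ, 0 < ε →
      ∃ h : (Fin k → ℂ) → ℂ, memU α β h ∧
        ∀ ζ ∈ multiSector α β,
          ‖g ζ - Complex.exp (-∑ j, (z' j - z j) * ζ j) * h ζ‖ ≤ ε) := by
  refine ⟨fun g hg => ⟨_, hg.cexp_neg_sum_mul hz, fun ζ _ => ?_⟩,
    fun g hg ε hε => hg.exists_norm_sub_cexp_neg_sum_mul_le hαβ hπ _ hε⟩
  rw [← mul_assoc, ← exp_add]
  simp only [sub_mul, Finset.sum_sub_distrib]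
  ring_nf
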